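/- The power allocation problem: maximize t subject to t ≤ eₘ·√(Pₘ) for m = 1,…,M (with eₘ > 0 fixed) and ∑ₘ Pₘ ≤ P·M, Pₘ ≥ 0, has optimal value t* = √(P·M) / √(∑ₘ 1/eₘ²), attained at Pₘ = (t*/eₘ)². -/

import Mathlib

/-!
Every constraint `t ≤ eₘ √Pₘ` with `t > 0` says `(t / eₘ)² ≤ Pₘ`; summing over `m` gives
`t² ∑ₘ 1 / eₘ² ≤ ∑ₘ Pₘ ≤ P M`, i.e. `t ≤ t*`. Conversely `Pₘ = (t* / eₘ)²` meets every
constraint with equality and spends exactly the power budget `P M`.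
-/

open Finset Real

theorem sum_div_sq_eq_sq_mul_sum_one_div_sq {ι : Type*} (s : Finset ι) (t : ℝ) (e : ι → ℝ) :
    ∑ m ∈ s, (t / e m) ^ 2 = t ^ 2 * ∑ m ∈ s, 1 / e m ^ 2 := by
  simp_rw [mul_sum, mul_one_div, div_pow]

theorem sq_div_le_of_le_mul_sqrt {t e p : ℝ} (ht : 0 < t) (he : 0 < e) (h : t ≤ e * √p) :
    (t / e) ^ 2 ≤ p :=
  (le_sqrt' (div_pos ht he)).1 ((div_le_iff₀' he).2 h)

theorem mul_sqrt_div_sq_eq {t e : ℝ} (ht : 0 ≤ t) (he : 0 < e) : e * √((t / e) ^ 2) = t := by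
  rw [sqrt_sq (div_nonneg ht he.le), mul_div_cancel₀ _ he.ne']

theorem le_sqrt_div_sqrt_of_sq_mul_le {t S c : ℝ} (hS : 0 < S) (h : t ^ 2 * S ≤ c) :
    t ≤ √c / √S :=
  calc t ≤ |t| := le_abs_self t
    _ = √(t ^ 2) := (sqrt_sq_eq_abs t).symm
    _ ≤ √(c / S) := sqrt_le_sqrt ((le_div_iff₀ hS).2 h)
    _ = √c / √S := sqrt_div' c hS.le

theorem sqrt_div_sqrt_sq_mul {S c : ℝ} (hS : 0 < S) (hc : 0 ≤ c) : (√c / √S) ^ 2 * S = c := by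
  rw [div_pow, sq_sqrt hc, sq_sqrt hS.le, div_mul_cancel₀ _ hS.ne']

theorem sq_mul_sum_one_div_sq_le {ι : Type*} [Fintype ι] {e Pv : ι → ℝ} {t : ℝ} (ht : 0 < t)
    (he : ∀ m, 0 < e m) (h : ∀ m, t ≤ e m * √(Pv m)) :
    t ^ 2 * ∑ m, 1 / e m ^ 2 ≤ ∑ m, Pv m := by
  rw [← sum_div_sq_eq_sq_mul_sum_one_div_sq]
  exact sum_le_sum fun m _ => sq_div_le_of_le_mul_sqrt ht (he m) (h m)

theorem power_allocation_optimal (M : ℕ) (hM : 0 < M) (e : Fin M → ℝ) (he : ∀ m, 0 < e m)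
    (P : ℝ) (hP : 0 < P) :
    IsGreatest
        {t : ℝ | ∃ Pv : Fin M → ℝ, (∀ m, 0 ≤ Pv m) ∧
          (∀ m, t ≤ e m * Real.sqrt (Pv m)) ∧ (∑ m, Pv m) ≤ P * M}
        (Real.sqrt (P * M) / Real.sqrt (∑ m, 1 / (e m) ^ 2)) ∧
    (∀ m, 0 ≤ (Real.sqrt (P * M) / Real.sqrt (∑ m, 1 / (e m) ^ 2) / e m) ^ 2) ∧
    (∀ m, Real.sqrt (P * M) / Real.sqrt (∑ m, 1 / (e m) ^ 2) ≤
        e m * Real.sqrt ((Real.sqrt (P * M) / Real.sqrt (∑ m, 1 / (e m) ^ 2) / e m) ^ 2)) ∧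
    (∑ m, (Real.sqrt (P * M) / Real.sqrt (∑ m, 1 / (e m) ^ 2) / e m) ^ 2) ≤ P * M := by
  set S := ∑ m, 1 / e m ^ 2
  have hS : 0 < S :=
    sum_pos (fun m _ => one_div_pos.2 (pow_pos (he m) 2)) (univ_nonempty_iff.2 ⟨⟨0, hM⟩⟩)
  have hPM : 0 ≤ P * M := by positivity
  set t := √(P * M) / √S
  have ht : 0 ≤ t := by positivity
  have hconstr : ∀ m, t ≤ e m * √((t / e m) ^ 2) := fun m => (mul_sqrt_div_sq_eq ht (he m)).ge
  have hbudget : ∑ m, (t / e m) ^ 2 ≤ P * M := by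
    rw [sum_div_sq_eq_sq_mul_sum_one_div_sq, sqrt_div_sqrt_sq_mul hS hPM]
  refine ⟨⟨⟨fun m => (t / e m) ^ 2, fun m => sq_nonneg _, hconstr, hbudget⟩, ?_⟩,
    fun m => sq_nonneg _, hconstr, hbudget⟩
  rintro x ⟨Pv, -, hx, hPv⟩
  rcases le_or_gt x 0 with hx0 | hx0
  · exact hx0.trans ht
  · exact le_sqrt_div_sqrt_of_sq_mul_le hS ((sq_mul_sum_one_div_sq_le hx0 he hx).trans hPv)
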